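/- Let B be a d×d real matrix such that Bᵀ + B is negative semidefinite, let X ∈ ℝ^d, and let l be an ω-limit point of the trajectory t ↦ exp(tB)X, i.e., l = lim_{j→∞} exp(t_j B)X for some sequence (t_j) strictly increasing to +∞. Then for every t ∈ ℝ one has ‖exp(tB)l‖ = ‖l‖ and exp(tB)l ∈ ker(Bᵀ+B). -/

import Mathlib

/-! Along a trajectory `x(t) = exp(tB)X` one has `d/dt ‖x‖² = xᵀ(Bᵀ + B)x ≤ 0`, so `‖x(t)‖`
decreases to a limit `c`. An ω-limit point `l` has norm `c`, and so does `exp(tB)l`, being the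
limit of `exp((t + t_j)B)X`. Hence `‖exp(tB)l‖²` is constant in `t`: the quadratic form of the
negative semidefinite symmetric matrix `Bᵀ + B` vanishes along the trajectory of `l`, which forces
that trajectory into its kernel. -/

open Matrix Filter

noncomputable section

variable {d : ℕ}

/-- The flow `t ↦ exp(tB)` of the linear ODE `ẋ = Bx`, as a continuous linear map. -/
def expFlow (B : Matrix (Fin d) (Fin d) ℝ) (t : ℝ) :
    EuclideanSpace ℝ (Fin d) →L[ℝ] EuclideanSpace ℝ (Fin d) :=
  NormedSpace.exp (t • LinearMap.toContinuousLinearMap (Matrix.toEuclideanLin B))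

theorem NormedSpace.exp_add_smul {𝕂 𝔸 : Type*} [RCLike 𝕂] [NormedRing 𝔸] [NormedAlgebra 𝕂 𝔸]
    [CompleteSpace 𝔸] (a : 𝔸) (s t : 𝕂) : exp ((s + t) • a) = exp (s • a) * exp (t • a) := by
  rw [add_smul]
  exact exp_add_of_commute_of_mem_ball (𝕂 := 𝕂) (((Commute.refl a).smul_left s).smul_right t)
    ((expSeries_radius_eq_top 𝕂 𝔸).symm ▸ edist_lt_top _ _)
    ((expSeries_radius_eq_top 𝕂 𝔸).symm ▸ edist_lt_top _ _)

theorem Matrix.IsSymm.mulVec_eq_zero_of_dotProduct_mulVec_eq_zero {n : Type*} [Fintype n]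
    {M : Matrix n n ℝ} (hM : M.IsSymm) (hneg : ∀ x, x ⬝ᵥ (M *ᵥ x) ≤ 0) {x : n → ℝ}
    (hx : x ⬝ᵥ (M *ᵥ x) = 0) : M *ᵥ x = 0 := by
  have hpos : (-M).PosSemidef :=
    .of_dotProduct_mulVec_nonneg (isHermitian_iff_isSymm.2 hM).neg fun y => by
      simpa [neg_mulVec] using hneg y
  simpa [neg_mulVec] using (hpos.dotProduct_mulVec_zero_iff x).1 (by simp [neg_mulVec, hx])

theorem Matrix.two_mul_inner_toEuclideanLin_self {n : Type*} [Fintype n] [DecidableEq n]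
    (B : Matrix n n ℝ) (y : EuclideanSpace ℝ n) :
    2 * inner ℝ y (B.toEuclideanLin y) = y.ofLp ⬝ᵥ ((Bᵀ + B) *ᵥ y.ofLp) := by
  rw [add_mulVec, dotProduct_add, mulVec_transpose, dotProduct_comm y.ofLp (_ ᵥ* B),
    ← dotProduct_mulVec, EuclideanSpace.inner_eq_star_dotProduct, toLpLin_apply, star_trivial,
    dotProduct_comm, two_mul]

section

variable (B : Matrix (Fin d) (Fin d) ℝ)

theorem expFlow_add (s t : ℝ) : expFlow B (s + t) = expFlow B s * expFlow B t :=
  NormedSpace.exp_add_smul (LinearMap.toContinuousLinearMap B.toEuclideanLin) s t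

theorem hasDerivAt_expFlow_apply (x : EuclideanSpace ℝ (Fin d)) (t : ℝ) :
    HasDerivAt (fun s => expFlow B s x) (B.toEuclideanLin (expFlow B t x)) t := by
  simpa [expFlow] using
    (hasDerivAt_exp_smul_const' (LinearMap.toContinuousLinearMap B.toEuclideanLin) t).clm_apply
      (hasDerivAt_const t x)

theorem hasDerivAt_norm_sq_expFlow_apply (x : EuclideanSpace ℝ (Fin d)) (t : ℝ) :
    HasDerivAt (fun s => ‖expFlow B s x‖ ^ 2)
      ((expFlow B t x).ofLp ⬝ᵥ ((Bᵀ + B) *ᵥ (expFlow B t x).ofLp)) t := by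
  rw [← two_mul_inner_toEuclideanLin_self]
  exact (hasDerivAt_expFlow_apply B x t).norm_sq

variable {B}

theorem antitone_norm_expFlow_apply (hB : ∀ x : Fin d → ℝ, x ⬝ᵥ ((Bᵀ + B) *ᵥ x) ≤ 0)
    (x : EuclideanSpace ℝ (Fin d)) : Antitone fun t => ‖expFlow B t x‖ := by
  have hsq : Antitone fun t => ‖expFlow B t x‖ ^ 2 :=
    antitone_of_hasDerivAt_nonpos (hasDerivAt_norm_sq_expFlow_apply B x) fun t => hB _
  exact fun s t hst => (pow_le_pow_iff_left₀ (norm_nonneg _) (norm_nonneg _) two_ne_zero).1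
    (hsq hst)

theorem tendsto_norm_expFlow_apply_atTop (hB : ∀ x : Fin d → ℝ, x ⬝ᵥ ((Bᵀ + B) *ᵥ x) ≤ 0)
    (x : EuclideanSpace ℝ (Fin d)) :
    Tendsto (fun t => ‖expFlow B t x‖) atTop (nhds (⨅ t, ‖expFlow B t x‖)) :=
  tendsto_atTop_ciInf (antitone_norm_expFlow_apply hB x) ⟨0, by rintro _ ⟨t, rfl⟩; positivity⟩

theorem norm_expFlow_apply_of_tendsto (hB : ∀ x : Fin d → ℝ, x ⬝ᵥ ((Bᵀ + B) *ᵥ x) ≤ 0)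
    {X l : EuclideanSpace ℝ (Fin d)} {tseq : ℕ → ℝ} (htop : Tendsto tseq atTop atTop)
    (hlim : Tendsto (fun j => expFlow B (tseq j) X) atTop (nhds l)) (t : ℝ) :
    ‖expFlow B t l‖ = ‖l‖ := by
  have hX := tendsto_norm_expFlow_apply_atTop hB X
  have hshift : Tendsto (fun j => expFlow B (t + tseq j) X) atTop (nhds (expFlow B t l)) := by
    refine (((expFlow B t).continuous.tendsto l).comp hlim).congr fun j => ?_
    rw [expFlow_add]
    rfl
  rw [tendsto_nhds_unique hshift.norm (hX.comp (tendsto_atTop_add_const_left atTop t htop)),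
    tendsto_nhds_unique hlim.norm (hX.comp htop)]

theorem expFlow_apply_mem_ker_of_forall_norm_eq (hB : ∀ x : Fin d → ℝ, x ⬝ᵥ ((Bᵀ + B) *ᵥ x) ≤ 0)
    {l : EuclideanSpace ℝ (Fin d)} (hl : ∀ s, ‖expFlow B s l‖ = ‖l‖) (t : ℝ) :
    expFlow B t l ∈ LinearMap.ker (Matrix.toEuclideanLin (Bᵀ + B)) := by
  have hconst : HasDerivAt (fun s => ‖expFlow B s l‖ ^ 2) 0 t := by
    simpa only [hl] using hasDerivAt_const t (‖l‖ ^ 2)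
  have hquad := (hasDerivAt_norm_sq_expFlow_apply B l t).unique hconst
  rw [LinearMap.mem_ker, toLpLin_apply,
    (isSymm_transpose_add_self B).mulVec_eq_zero_of_dotProduct_mulVec_eq_zero hB hquad,
    WithLp.toLp_zero]

end

theorem omega_limit_in_kernel_general (B : Matrix (Fin d) (Fin d) ℝ)
    (hB : ∀ x : Fin d → ℝ, x ⬝ᵥ ((Bᵀ + B) *ᵥ x) ≤ 0)
    (X l : EuclideanSpace ℝ (Fin d)) (tseq : ℕ → ℝ)
    (htop : Tendsto tseq atTop atTop)
    (hlim : Tendsto (fun j => expFlow B (tseq j) X) atTop (nhds l)) :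
    ∀ t : ℝ, ‖expFlow B t l‖ = ‖l‖ ∧
      expFlow B t l ∈ LinearMap.ker (Matrix.toEuclideanLin (Bᵀ + B)) := by
  have hnorm := norm_expFlow_apply_of_tendsto hB htop hlim
  exact fun t => ⟨hnorm t, expFlow_apply_mem_ker_of_forall_norm_eq hB hnorm t⟩

/-- If `Bᵀ + B` is negative semidefinite and `l` is an ω-limit point of
the trajectory `t ↦ exp(tB)X` (i.e. `l = lim_j exp(t_j B)X` along a sequence strictly
increasing to `+∞`), then for every `t ∈ ℝ`, `‖exp(tB)l‖ = ‖l‖` and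
`exp(tB)l ∈ ker(Bᵀ + B)`. -/
theorem omega_limit_in_kernel (B : Matrix (Fin d) (Fin d) ℝ)
    (hB : ∀ x : Fin d → ℝ, x ⬝ᵥ ((Bᵀ + B) *ᵥ x) ≤ 0)
    (X l : EuclideanSpace ℝ (Fin d)) (tseq : ℕ → ℝ)
    (htseq : StrictMono tseq) (htop : Tendsto tseq atTop atTop)
    (hlim : Tendsto (fun j => expFlow B (tseq j) X) atTop (nhds l)) :
    ∀ t : ℝ, ‖expFlow B t l‖ = ‖l‖ ∧
      expFlow B t l ∈ LinearMap.ker (Matrix.toEuclideanLin (Bᵀ + B)) :=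
  omega_limit_in_kernel_general B hB X l tseq htop hlim

end
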